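/- In the setting of a Galois extension A/B with splitting data as in the converse direction of the main theorem, the convolution inverse γ⁻¹ of γ = Φ(1 ⊗ -) satisfies ψ(γ⁻¹(h)) = Σ γ⁻¹(h₍₂₎) ⊗ S(h₍₁₎) for all h ∈ H, where ψ is the H-coaction on A and S is the antipode. -/

import Mathlib

open TensorProduct LinearMap

noncomputable section

namespace CrossedGalois

/-- Convolution product of two linear maps from a coalgebra to an algebra. -/
def conv (k : Type) [Field k] {C B : Type} [AddCommGroup C] [Module k C] [Coalgebra k C]
    [Ring B] [Algebra k B] (f g : C →ₗ[k] B) : C →ₗ[k] B :=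
  (LinearMap.mul' k B) ∘ₗ (TensorProduct.map f g) ∘ₗ (Coalgebra.comul (R := k))

/-- The unit `η ∘ ε` for the convolution product. -/
def convOne (k : Type) [Field k] (C B : Type) [AddCommGroup C] [Module k C] [Coalgebra k C]
    [Ring B] [Algebra k B] : C →ₗ[k] B :=
  (Algebra.linearMap k B) ∘ₗ (Coalgebra.counit (R := k))

/-- Convolution invertibility. -/
def ConvInvertible (k : Type) [Field k] {C B : Type} [AddCommGroup C] [Module k C]
    [Coalgebra k C] [Ring B] [Algebra k B] (f : C →ₗ[k] B) : Prop :=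
  ∃ g : C →ₗ[k] B, conv k f g = convOne k C B ∧ conv k g f = convOne k C B

variable (k : Type) [Field k]

section CrossedProduct

variable (B H : Type) [Ring B] [Algebra k B] [Ring H] [Bialgebra k H]

/-- `h ↦ α (h ⊗ b)`. -/
def actOn (α : H ⊗[k] B →ₗ[k] B) (b : B) : H →ₗ[k] B :=
  α ∘ₗ ((TensorProduct.mk k H B).flip b)

/-- `α` is a weak action of the bialgebra `H` on the algebra `B` :
`h · (ab) = Σ (h₁ · a)(h₂ · b)` and `h · 1 = ε(h) 1`. -/
structure IsWeakAction (α : H ⊗[k] B →ₗ[k] B) : Prop where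
  smul_mul : ∀ (h : H) (a b : B),
    α (h ⊗ₜ (a * b)) =
      LinearMap.mul' k B ((TensorProduct.map α α)
        ((TensorProduct.tensorTensorTensorComm k H H B B)
          ((Coalgebra.comul (R := k) h) ⊗ₜ (a ⊗ₜ b))))
  smul_one : ∀ h : H, α (h ⊗ₜ (1 : B)) = (Coalgebra.counit (R := k) h) • (1 : B)

/-- The 2-cocycle condition
`Σ (h₁ · σ(g₁,l₁)) σ(h₂, g₂l₂) = Σ σ(h₁,g₁) σ(h₂g₂, l)`
together with the normalisation `σ(h,1) = σ(1,h) = ε(h)1`. -/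
structure IsCocycle (α : H ⊗[k] B →ₗ[k] B) (σ : H ⊗[k] H →ₗ[k] B) : Prop where
  cocycle :
    conv k (α ∘ₗ lTensor H σ) (σ ∘ₗ lTensor H (LinearMap.mul' k H)) =
    conv k (σ ∘ₗ lTensor H ((TensorProduct.rid k H).toLinearMap ∘ₗ
              lTensor H (Coalgebra.counit (R := k))))
           (σ ∘ₗ (rTensor H (LinearMap.mul' k H)) ∘ₗ
              (TensorProduct.assoc k H H H).symm.toLinearMap)
  norm_right : ∀ h : H, σ (h ⊗ₜ (1 : H)) = (Coalgebra.counit (R := k) h) • (1 : B)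
  norm_left : ∀ h : H, σ ((1 : H) ⊗ₜ h) = (Coalgebra.counit (R := k) h) • (1 : B)

/-- `B` is a twisted `H`-module:  `1 · b = b` and
`Σ (h₁ · (g₁ · b)) σ(h₂,g₂) = Σ σ(h₁,g₁) ((h₂g₂) · b)`. -/
structure IsTwistedModule (α : H ⊗[k] B →ₗ[k] B) (σ : H ⊗[k] H →ₗ[k] B) : Prop where
  one_smul : ∀ b : B, α ((1 : H) ⊗ₜ b) = b
  twisted : ∀ b : B,
    conv k (α ∘ₗ lTensor H (actOn k B H α b)) σ =
    conv k σ ((actOn k B H α b) ∘ₗ LinearMap.mul' k H)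

/-- The multiplication of the crossed product `B #_σ H`:
`(a # h)(b # g) = Σ a (h₁·b) σ(h₂,g₁) # h₃g₂`. -/
def cpMul (α : H ⊗[k] B →ₗ[k] B) (σ : H ⊗[k] H →ₗ[k] B) :
    (B ⊗[k] H) ⊗[k] (B ⊗[k] H) →ₗ[k] B ⊗[k] H :=
  (rTensor H (LinearMap.mul' k B)) ∘ₗ
  (TensorProduct.assoc k B B H).symm.toLinearMap ∘ₗ
  (lTensor B
    ((rTensor H (LinearMap.mul' k B)) ∘ₗ
     (TensorProduct.assoc k B B H).symm.toLinearMap ∘ₗ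
     (TensorProduct.map α (TensorProduct.map σ (LinearMap.mul' k H))) ∘ₗ
     (lTensor (H ⊗[k] B) (TensorProduct.tensorTensorTensorComm k H H H H).toLinearMap) ∘ₗ
     (TensorProduct.tensorTensorTensorComm k H (H ⊗[k] H) B (H ⊗[k] H)).toLinearMap ∘ₗ
     (TensorProduct.map ((lTensor H (Coalgebra.comul (R := k))) ∘ₗ (Coalgebra.comul (R := k)))
       (lTensor B (Coalgebra.comul (R := k)))))) ∘ₗ
  (TensorProduct.assoc k B H (B ⊗[k] H)).toLinearMap

/-- The unit `1 # 1` of the crossed product. -/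
def cpOne : B ⊗[k] H := (1 : B) ⊗ₜ (1 : H)

/-- The crossed product multiplication is associative with unit `1 ⊗ 1`. -/
def IsCpAlgebra (α : H ⊗[k] B →ₗ[k] B) (σ : H ⊗[k] H →ₗ[k] B) : Prop :=
  (∀ x y z : B ⊗[k] H,
      cpMul k B H α σ ((cpMul k B H α σ (x ⊗ₜ y)) ⊗ₜ z) =
      cpMul k B H α σ (x ⊗ₜ (cpMul k B H α σ (y ⊗ₜ z)))) ∧
  (∀ x : B ⊗[k] H, cpMul k B H α σ ((cpOne k B H) ⊗ₜ x) = x) ∧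
  (∀ x : B ⊗[k] H, cpMul k B H α σ (x ⊗ₜ (cpOne k B H)) = x)

/-- The right `H`-coaction `id_B ⊗ Δ` on `B ⊗ H`. -/
def cpCoact : B ⊗[k] H →ₗ[k] (B ⊗[k] H) ⊗[k] H :=
  (TensorProduct.assoc k B H H).symm.toLinearMap ∘ₗ lTensor B (Coalgebra.comul (R := k))

end CrossedProduct

section Galois

variable (H : Type) [Ring H] [Bialgebra k H]

/-- The submodule of `A ⊗ A` spanned by `xb ⊗ y - x ⊗ by` for `b` in a given subset `S`,
with respect to a given multiplication map `M`; its quotient is `A ⊗_B A`. -/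
def midRel {A : Type} [AddCommGroup A] [Module k A]
    (M : A ⊗[k] A →ₗ[k] A) (S : Set A) : Submodule k (A ⊗[k] A) :=
  Submodule.span k {z | ∃ x y b, b ∈ S ∧
    z = (M (x ⊗ₜ b)) ⊗ₜ y - x ⊗ₜ (M (b ⊗ₜ y))}

/-- The map `can' : A ⊗ A → A ⊗ H`, `x ⊗ y ↦ Σ x y₍₀₎ ⊗ y₍₁₎`. -/
def canMap {A : Type} [AddCommGroup A] [Module k A]
    (M : A ⊗[k] A →ₗ[k] A) (ρ : A →ₗ[k] A ⊗[k] H) : A ⊗[k] A →ₗ[k] A ⊗[k] H :=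
  (rTensor H M) ∘ₗ (TensorProduct.assoc k A A H).symm.toLinearMap ∘ₗ (lTensor A ρ)

/-- The extension is `H`-Galois: the canonical map descends to a bijection
`A ⊗_B A → A ⊗ H`. -/
def IsGalois {A : Type} [AddCommGroup A] [Module k A]
    (M : A ⊗[k] A →ₗ[k] A) (ρ : A →ₗ[k] A ⊗[k] H) (S : Set A) : Prop :=
  ∃ can : ((A ⊗[k] A) ⧸ midRel k M S) →ₗ[k] A ⊗[k] H,
    can ∘ₗ (midRel k M S).mkQ = canMap k H M ρ ∧ Function.Bijective can

/-- `A` is a right `H`-comodule algebra. -/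
structure IsComodAlg {A : Type} [Ring A] [Algebra k A]
    (ρ : A →ₗ[k] A ⊗[k] H) : Prop where
  coassoc : ∀ a : A, (rTensor H ρ) (ρ a) =
    (TensorProduct.assoc k A H H).symm ((lTensor A (Coalgebra.comul (R := k))) (ρ a))
  counit_id : ∀ a : A,
    (TensorProduct.rid k A) ((lTensor A (Coalgebra.counit (R := k))) (ρ a)) = a
  mul : ∀ a b : A, ρ (a * b) = ρ a * ρ b
  one : ρ 1 = 1

end Galois

end CrossedGalois

/-!
In the convolution algebra `Hom(H, A ⊗ H)`, colinearity of `γ` says `ψ ∘ γ = (γ ⊗ 1) * (1 ⊗ id)`.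
Since `ψ` is multiplicative, `ψ ∘ γ⁻¹` is a right inverse of `ψ ∘ γ`, while
`(1 ⊗ S) * (γ⁻¹ ⊗ 1)` is a left inverse because `γ⁻¹ * γ = 1` and `S * id = 1`.
The two inverses coincide, and the latter is `h ↦ Σ γ⁻¹(h₂) ⊗ S(h₁)`.
-/

open Coalgebra WithConv

section

variable {R C A B : Type*} [CommSemiring R] [AddCommMonoid C] [Module R C] [Coalgebra R C]
  [Semiring A] [Algebra R A] [Semiring B] [Algebra R B]

def AlgHom.compConvRingHom (φ : A →ₐ[R] B) : WithConv (C →ₗ[R] A) →+* WithConv (C →ₗ[R] B) where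
  toFun f := toConv (φ.toLinearMap ∘ₗ f.ofConv)
  map_one' := by ext; simp
  map_mul' f g := congrArg toConv (LinearMap.algHom_comp_convMul_distrib φ f g)
  map_zero' := by ext; simp
  map_add' f g := by ext; simp

@[simp] lemma AlgHom.compConvRingHom_apply (φ : A →ₐ[R] B) (f : WithConv (C →ₗ[R] A)) :
    φ.compConvRingHom f = toConv (φ.toLinearMap ∘ₗ f.ofConv) := rfl

open Algebra.TensorProduct in
lemma toConv_includeLeft_mul_toConv_includeRight (f : C →ₗ[R] A) (g : C →ₗ[R] B) :
    toConv ((includeLeft : A →ₐ[R] A ⊗[R] B).toLinearMap ∘ₗ f) *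
      toConv ((includeRight : B →ₐ[R] A ⊗[R] B).toLinearMap ∘ₗ g) =
    toConv (TensorProduct.map f g ∘ₗ comul) := by
  ext c
  rw [(ℛ R c).convMul_apply, ofConv_toConv, LinearMap.comp_apply, ← (ℛ R c).eq]
  simp

open Algebra.TensorProduct in
lemma toConv_includeRight_mul_toConv_includeLeft (f : C →ₗ[R] A) (g : C →ₗ[R] B) :
    toConv ((includeRight : B →ₐ[R] A ⊗[R] B).toLinearMap ∘ₗ g) *
      toConv ((includeLeft : A →ₐ[R] A ⊗[R] B).toLinearMap ∘ₗ f) =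
    toConv (TensorProduct.map f g ∘ₗ (TensorProduct.comm R C C).toLinearMap ∘ₗ comul) := by
  ext c
  rw [(ℛ R c).convMul_apply, ofConv_toConv, LinearMap.comp_apply, LinearMap.comp_apply,
    ← (ℛ R c).eq]
  simp

end

namespace CrossedGalois

section

variable (k : Type) [Field k] {C B : Type} [AddCommGroup C] [Module k C] [Coalgebra k C]
  [Ring B] [Algebra k B]

lemma toConv_conv (f g : C →ₗ[k] B) : toConv (conv k f g) = toConv f * toConv g := rfl

lemma toConv_convOne : toConv (convOne k C B) = 1 := rfl

end

open Algebra.TensorProduct in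
theorem coaction_of_gamma_inverse
    (k A H : Type) [Field k] [Ring A] [Algebra k A] [Ring H] [HopfAlgebra k H]
    (ρ : A →ₗ[k] A ⊗[k] H) (hA : IsComodAlg k H ρ)
    (γ μ : H →ₗ[k] A)
    (hγcolin : ∀ h : H, ρ (γ h) = (rTensor H γ) (Coalgebra.comul (R := k) h))
    (hconv : conv k γ μ = convOne k H A ∧ conv k μ γ = convOne k H A) :
    ∀ h : H, ρ (μ h) =
      (TensorProduct.map μ (HopfAlgebra.antipode (R := k)))
        ((TensorProduct.comm k H H) (Coalgebra.comul (R := k) h)) := by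
  have hγμ : toConv γ * toConv μ = 1 := by rw [← toConv_conv, hconv.1, toConv_convOne]
  have hμγ : toConv μ * toConv γ = 1 := by rw [← toConv_conv, hconv.2, toConv_convOne]
  let ψ : A →ₐ[k] A ⊗[k] H := .ofLinearMap ρ hA.one hA.mul
  let ιA := (includeLeft : A →ₐ[k] A ⊗[k] H).compConvRingHom (C := H)
  let ιH := (includeRight : H →ₐ[k] A ⊗[k] H).compConvRingHom (C := H)
  have hψγ : ψ.compConvRingHom (toConv γ) = ιA (toConv γ) * ιH (toConv .id) := by
    simp only [ιA, ιH, AlgHom.compConvRingHom_apply, toConv_includeLeft_mul_toConv_includeRight]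
    exact congrArg toConv (LinearMap.ext hγcolin)
  have right_inv : ψ.compConvRingHom (toConv γ) * ψ.compConvRingHom (toConv μ) = 1 := by
    rw [← map_mul, hγμ, map_one]
  have left_inv :
      ιH (toConv (HopfAlgebra.antipode k)) * ιA (toConv μ) * ψ.compConvRingHom (toConv γ) = 1 := by
    rw [hψγ, mul_assoc, ← mul_assoc (ιA _), ← map_mul, hμγ, map_one, one_mul, ← map_mul,
      LinearMap.antipode_mul_id, map_one]
  have inv_eq := left_inv_eq_right_inv left_inv right_inv
  simp only [ιA, ιH, AlgHom.compConvRingHom_apply, toConv_includeRight_mul_toConv_includeLeft]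
    at inv_eq
  exact fun h => (LinearMap.congr_fun (congrArg ofConv inv_eq) h).symm

end CrossedGalois
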